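/- In seq-Phragmén, candidate loads are nondecreasing along the iterations: if s^(j) denotes the load of the candidate elected at iteration j, then s^(1) ≤ s^(2) ≤ ... ≤ s^(k), and consequently s_{c_j}^(j) ≥ x_r^(j−1) for every iteration j and voter r; in particular, if c_h is elected at iteration h then s_{c_h}^(h) ≥ (1 + x_i^(h−1) + Σ_{r : c_h ∈ A_r} x_r^(h−1)) / (1 + |{r : c_h ∈ A_r}|) for any voter i. -/

import Mathlib

/-! Induct on the iteration with the invariant that every voter's load is at most the load of the
candidate just elected. Under it the new voter loads dominate the old ones pointwise, and a
candidate's load is monotone in the voter loads; as the next winner was already available, its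
minimality gives `s^(j) ≤ s_{c_{j+1}}^(j) ≤ s^(j+1)`, which re-establishes the invariant.
The last claim is the mediant inequality applied to `x_i ≤ s`. -/

open Finset

variable {C : Type*} [Fintype C] [DecidableEq C]

/-- The seq-Phragmén load that candidate `c` would get, given voter loads `x`. -/
def phrCandLoad {V : Type*} [Fintype V] (A : V → Finset C) (x : V → ℚ) (c : C) : ℚ :=
  (1 + ∑ i ∈ univ.filter fun i => c ∈ A i, x i) /
    ((univ.filter fun i : V => c ∈ A i).card : ℚ)

/-- The voter loads after `j` iterations of seq-Phragmén, when `w t` is the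
candidate elected at iteration `t+1` (0-indexed):  initially all loads are `0`,
and the approvers of the elected candidate get its candidate load. -/
def runLoad {V : Type*} [Fintype V] (A : V → Finset C) (w : ℕ → C) : ℕ → V → ℚ
  | 0 => fun _ => 0
  | j + 1 => fun i =>
      if w j ∈ A i then phrCandLoad A (runLoad A w j) (w j) else runLoad A w j i

/-- `w` describes a valid run of seq-Phragmén for `k` iterations: at each
iteration the elected candidate is new, has at least one approver, and has
minimal candidate load among the non-elected candidates with an approver. -/
def isSeqPhragmenRun {V : Type*} [Fintype V] (A : V → Finset C) (w : ℕ → C)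
    (k : ℕ) : Prop :=
  ∀ j < k, (∀ j' < j, w j' ≠ w j) ∧
    (univ.filter fun i : V => w j ∈ A i).Nonempty ∧
    ∀ c : C, (∀ j' < j, w j' ≠ c) → (univ.filter fun i : V => c ∈ A i).Nonempty →
      phrCandLoad A (runLoad A w j) (w j) ≤ phrCandLoad A (runLoad A w j) c

lemma add_div_one_add_le_div {α : Type*} [Field α] [LinearOrder α] [IsStrictOrderedRing α]
    {a b x : α} (hb : 0 < b) (hx : x ≤ a / b) : (x + a) / (1 + b) ≤ a / b := by
  rw [le_div_iff₀ hb] at hx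
  rw [div_le_div_iff₀ (by linarith) hb]
  linarith

section

omit [Fintype C]

variable {V : Type*} [Fintype V] (A : V → Finset C)

lemma phrCandLoad_nonneg {x : V → ℚ} (hx : 0 ≤ x) (c : C) : 0 ≤ phrCandLoad A x c := by
  have hsum := sum_nonneg fun i (_ : i ∈ univ.filter fun i => c ∈ A i) => hx i
  unfold phrCandLoad
  positivity

lemma phrCandLoad_mono (c : C) : Monotone fun x => phrCandLoad A x c := fun _ _ hxy => by
  dsimp only [phrCandLoad]
  gcongr with i
  exact hxy i

/-- The paper's `s^(j+1)`: iterations are 1-indexed there. -/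
def electedLoad (w : ℕ → C) (j : ℕ) : ℚ := phrCandLoad A (runLoad A w j) (w j)

variable {A} {w : ℕ → C} {j : ℕ}

lemma runLoad_succ_le_electedLoad (h : ∀ r, runLoad A w j r ≤ electedLoad A w j) (r : V) :
    runLoad A w (j + 1) r ≤ electedLoad A w j := by
  simp only [runLoad]
  split_ifs
  exacts [le_rfl, h r]

lemma runLoad_le_runLoad_succ (h : ∀ r, runLoad A w j r ≤ electedLoad A w j) :
    runLoad A w j ≤ runLoad A w (j + 1) := fun r => by
  simp only [runLoad]
  split_ifs
  exacts [h r, le_rfl]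

namespace isSeqPhragmenRun

variable {k : ℕ}

lemma electedLoad_le_succ (hrun : isSeqPhragmenRun A w k) (hk : j + 1 < k)
    (h : ∀ r, runLoad A w j r ≤ electedLoad A w j) :
    electedLoad A w j ≤ electedLoad A w (j + 1) :=
  calc electedLoad A w j ≤ phrCandLoad A (runLoad A w j) (w (j + 1)) :=
        (hrun j (by omega)).2.2 _ (fun j' hj' => (hrun (j + 1) hk).1 j' (by omega))
          (hrun (j + 1) hk).2.1
    _ ≤ electedLoad A w (j + 1) := phrCandLoad_mono A _ (runLoad_le_runLoad_succ h)

lemma runLoad_le_electedLoad (hrun : isSeqPhragmenRun A w k) :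
    ∀ j < k, ∀ r, runLoad A w j r ≤ electedLoad A w j
  | 0, _, _ => phrCandLoad_nonneg A le_rfl _
  | j + 1, hk, r =>
    have h := hrun.runLoad_le_electedLoad j (by omega)
    (runLoad_succ_le_electedLoad h r).trans (hrun.electedLoad_le_succ hk h)

lemma electedLoad_monotoneOn (hrun : isSeqPhragmenRun A w k) :
    MonotoneOn (electedLoad A w) (Set.Iio k) :=
  monotoneOn_of_le_succ Set.ordConnected_Iio fun j _ hj hj1 => by
    rw [Order.succ_eq_add_one] at hj1 ⊢
    exact hrun.electedLoad_le_succ hj1 (hrun.runLoad_le_electedLoad j hj)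

end isSeqPhragmenRun

end

/-- In seq-Phragmén the loads of the elected candidates are nondecreasing along
the iterations; consequently the load of the candidate elected at any iteration
is at least the current load of any voter, and at least the mediant
`(1 + x_i + Σ_{r : c_h ∈ A_r} x_r) / (1 + |{r : c_h ∈ A_r}|)` for any voter `i`. -/
theorem seqphragmen_loads_monotone {V : Type*} [Fintype V]
    (A : V → Finset C) (w : ℕ → C) (k : ℕ) (hrun : isSeqPhragmenRun A w k) :
    (∀ j j', j ≤ j' → j' < k →
      phrCandLoad A (runLoad A w j) (w j) ≤ phrCandLoad A (runLoad A w j') (w j')) ∧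
    (∀ j < k, ∀ r : V, runLoad A w j r ≤ phrCandLoad A (runLoad A w j) (w j)) ∧
    (∀ h < k, ∀ i : V,
      (1 + runLoad A w h i + ∑ r ∈ univ.filter fun r => w h ∈ A r, runLoad A w h r) /
          (1 + ((univ.filter fun r : V => w h ∈ A r).card : ℚ)) ≤
        phrCandLoad A (runLoad A w h) (w h)) := by
  refine ⟨fun j j' hjj' hj' => hrun.electedLoad_monotoneOn (hjj'.trans_lt hj') hj' hjj',
    hrun.runLoad_le_electedLoad, fun h hk i => ?_⟩
  have hcard : (0 : ℚ) < (univ.filter fun r : V => w h ∈ A r).card := by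
    exact_mod_cast card_pos.2 (hrun h hk).2.1
  calc _ = (runLoad A w h i + (1 + ∑ r ∈ univ.filter fun r => w h ∈ A r, runLoad A w h r)) /
        (1 + ((univ.filter fun r : V => w h ∈ A r).card : ℚ)) := by ring
    _ ≤ _ := add_div_one_add_le_div hcard (hrun.runLoad_le_electedLoad h hk i)
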